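/- arXiv:2004.09254 — 2 statements merged into one kernel-verified Lean document; each statement's English description precedes it below -/
import Mathlib

section
/- Let L : ℝ × ℝ × ℝ → ℝ be a smooth Lagrangian L(t, q, v), let q : ℝ → ℝ be a smooth Euler–Lagrange solution, i.e. d/dt[∂₃L(t, q(t), q′(t))] = ∂₂L(t, q(t), q′(t)) for all t, and let ξ : ℝ → ℝ and φ : ℝ × ℝ → ℝ be smooth (the infinitesimal time transformation Δt = ξ(t) and space transformation Δq = φ(t, q)). Assume the infinitesimal invariance identity along q: for all t, with all partials of L evaluated at (t, q(t), q′(t)), ∂₁L·ξ(t) + ∂₂L·φ(t, q(t)) + ∂₃L·(d/dt[φ(t, q(t))] − q′(t)·ξ′(t)) + L(t, q(t), q′(t))·ξ′(t) = 0. Then the Noether quantity J(t) = L(t, q(t), q′(t))·ξ(t) + ∂₃L(t, q(t), q′(t))·(φ(t, q(t)) − q′(t)·ξ(t)) is constant on ℝ (Noether's first theorem for a one-parameter group acting on both the independent and dependent variables). -/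
/-!
Along `q` the total derivative of `L` is `∂₁L + q′ ∂₂L + q″ ∂₃L`, and by the Euler–Lagrange
equation `(∂₃L)′ = ∂₂L`. Differentiating `J` with the product rule, the `q″ ξ ∂₃L` terms cancel
and what remains is exactly the left-hand side of the invariance identity, so `J′ = 0`.
-/

section PartialDerivatives

variable {L : ℝ × ℝ × ℝ → ℝ} {a b c : ℝ}

theorem deriv_slice_fst (hL : DifferentiableAt ℝ L (a, b, c)) :
    deriv (fun s => L (s, b, c)) a = fderiv ℝ L (a, b, c) (1, 0, 0) :=
  ((hL.hasFDerivAt.comp_hasDerivAt a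
    ((hasDerivAt_id a).prodMk ((hasDerivAt_const a b).prodMk (hasDerivAt_const a c))))).deriv

theorem deriv_slice_snd (hL : DifferentiableAt ℝ L (a, b, c)) :
    deriv (fun s => L (a, s, c)) b = fderiv ℝ L (a, b, c) (0, 1, 0) :=
  ((hL.hasFDerivAt.comp_hasDerivAt b
    ((hasDerivAt_const b a).prodMk ((hasDerivAt_id b).prodMk (hasDerivAt_const b c))))).deriv

theorem deriv_slice_thd (hL : DifferentiableAt ℝ L (a, b, c)) :
    deriv (fun s => L (a, b, s)) c = fderiv ℝ L (a, b, c) (0, 0, 1) :=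
  ((hL.hasFDerivAt.comp_hasDerivAt c
    ((hasDerivAt_const c a).prodMk ((hasDerivAt_const c b).prodMk (hasDerivAt_id c))))).deriv

end PartialDerivatives

section AlongCurve

variable {L : ℝ × ℝ × ℝ → ℝ} {x v : ℝ → ℝ}

theorem hasDerivAt_comp_graph {t x' v' : ℝ} (hL : DifferentiableAt ℝ L (t, x t, v t))
    (hx : HasDerivAt x x' t) (hv : HasDerivAt v v' t) :
    HasDerivAt (fun s => L (s, x s, v s))
      (deriv (fun s => L (s, x t, v t)) t + x' * deriv (fun s => L (t, s, v t)) (x t)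
        + v' * deriv (fun s => L (t, x t, s)) (v t)) t := by
  have hchain := hL.hasFDerivAt.comp_hasDerivAt t ((hasDerivAt_id t).prodMk (hx.prodMk hv))
  have hsplit : ((1, x', v') : ℝ × ℝ × ℝ) = (1, 0, 0) + x' • (0, 1, 0) + v' • (0, 0, 1) := by
    simp
  rw [deriv_slice_fst hL, deriv_slice_snd hL, deriv_slice_thd hL]
  refine hchain.congr_deriv ?_
  rw [hsplit, map_add, map_add, map_smul, map_smul, smul_eq_mul, smul_eq_mul]

theorem differentiable_deriv_slice_thd_comp (hL : ContDiff ℝ 2 L) (hx : Differentiable ℝ x)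
    (hv : Differentiable ℝ v) :
    Differentiable ℝ fun t => deriv (fun s => L (t, x t, s)) (v t) := by
  have hLd : Differentiable ℝ L := hL.differentiable (by norm_num)
  simp only [fun t => deriv_slice_thd (hLd (t, x t, v t))]
  exact ((hL.fderiv_right (m := 1) (by norm_num)).differentiable (by norm_num)).comp
    (differentiable_id.prodMk (hx.prodMk hv)) |>.clm_apply (differentiable_const _)

end AlongCurve

/-- Noether's first theorem for a one-parameter group acting on both the
independent and the dependent variable: if `q` is a smooth Euler–Lagrange
solution of the smooth Lagrangian `L(t, q, v)`, and the infinitesimal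
transformation `Δt = ξ(t)`, `Δq = φ(t, q)` satisfies the infinitesimal
invariance identity
`∂₁L·ξ + ∂₂L·φ + ∂₃L·(d/dt[φ(t,q(t))] − q′·ξ′) + L·ξ′ = 0` along `q`,
then the Noether quantity
`J(t) = L·ξ(t) + ∂₃L·(φ(t, q(t)) − q′(t)·ξ(t))` is constant on `ℝ`. -/
theorem noether_first_theorem_time_and_space
    (L : ℝ × ℝ × ℝ → ℝ) (q : ℝ → ℝ) (ξ : ℝ → ℝ) (φ : ℝ × ℝ → ℝ)
    (hL : ContDiff ℝ (⊤ : ℕ∞) L)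
    (hq : ContDiff ℝ (⊤ : ℕ∞) q)
    (hξ : ContDiff ℝ (⊤ : ℕ∞) ξ)
    (hφ : ContDiff ℝ (⊤ : ℕ∞) φ)
    (P1 P2 P3 : ℝ → ℝ)
    (hP1 : ∀ t, P1 t = deriv (fun s => L (s, q t, deriv q t)) t)
    (hP2 : ∀ t, P2 t = deriv (fun s => L (t, s, deriv q t)) (q t))
    (hP3 : ∀ t, P3 t = deriv (fun s => L (t, q t, s)) (deriv q t))
    (hEL : ∀ t, deriv P3 t = P2 t)
    (hinv : ∀ t : ℝ,
      P1 t * ξ t + P2 t * φ (t, q t)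
        + P3 t * (deriv (fun s => φ (s, q s)) t - deriv q t * deriv ξ t)
        + L (t, q t, deriv q t) * deriv ξ t = 0)
    (J : ℝ → ℝ)
    (hJ : ∀ t, J t = L (t, q t, deriv q t) * ξ t
        + P3 t * (φ (t, q t) - deriv q t * ξ t)) :
    ∀ s t : ℝ, J s = J t := by
  have hqd : Differentiable ℝ q := hq.differentiable (by simp)
  have hq'd : Differentiable ℝ (deriv q) :=
    ((contDiff_infty_iff_deriv.mp hq).2).differentiable (by simp)
  have hξd : Differentiable ℝ ξ := hξ.differentiable (by simp)
  have hΦd : Differentiable ℝ fun s => φ (s, q s) :=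
    (hφ.comp (contDiff_id.prodMk hq)).differentiable (by simp)
  have hP3d : Differentiable ℝ P3 := by
    rw [funext hP3]
    exact differentiable_deriv_slice_thd_comp (hL.of_le (WithTop.coe_le_coe.mpr le_top)) hqd hq'd
  have hJ' : ∀ t, HasDerivAt J 0 t := by
    intro t
    have hLq := hasDerivAt_comp_graph (hL.differentiable (by simp) _)
      (hqd t).hasDerivAt (hq'd t).hasDerivAt
    rw [← hP1, ← hP2, ← hP3] at hLq
    have hP3' : HasDerivAt P3 (P2 t) t := hEL t ▸ (hP3d t).hasDerivAt
    have hJt := (hLq.fun_mul (hξd t).hasDerivAt).fun_add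
      (hP3'.fun_mul ((hΦd t).hasDerivAt.fun_sub ((hq'd t).hasDerivAt.fun_mul (hξd t).hasDerivAt)))
    rw [funext hJ]
    refine hJt.congr_deriv ?_
    linear_combination hinv t
  intro s t
  exact is_const_of_deriv_eq_zero (fun t => (hJ' t).differentiableAt) (fun t => (hJ' t).deriv) s t
end

section
/- Let n ≥ 1, let L : ℝⁿ × ℝ × ℝⁿ → ℝ be a smooth first-order Lagrangian L(x, u, p), and let u : ℝⁿ → ℝ be a smooth Euler–Lagrange solution: ∂ᵤL(x, u(x), ∇u(x)) = ∑_{i=1}^{n} ∂ᵢ[∂_{pᵢ}L(x, u(x), ∇u(x))] for all x ∈ ℝⁿ. Let Q : ℝⁿ → ℝ be smooth and assume the infinitesimal invariance identity along u: for all x, ∂ᵤL(x, u(x), ∇u(x))·Q(x) + ∑_{i=1}^{n} ∂_{pᵢ}L(x, u(x), ∇u(x))·∂ᵢQ(x) = 0. Then the Noether current B = (B₁, …, Bₙ), Bᵢ(x) = ∂_{pᵢ}L(x, u(x), ∇u(x))·Q(x), is divergence-free: ∑_{i=1}^{n} ∂ᵢBᵢ(x) = 0 for all x ∈ ℝⁿ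 (Div B = 0, the conservation law of Noether's first theorem for n independent variables). -/
/-! Along a solution the Euler–Lagrange equation says `Div (∂ₚL) = ∂ᵤL`, so by the product rule
`Div (Q · ∂ₚL) = ∂ᵤL · Q + ∂ₚL · ∇Q`, which is the invariance identity and hence vanishes. -/

/-- The `i`-th partial derivative of a function on `ℝⁿ = Fin n → ℝ`. -/
noncomputable def pderiv' {n : ℕ} (i : Fin n) (f : (Fin n → ℝ) → ℝ)
    (x : Fin n → ℝ) : ℝ :=
  fderiv ℝ f x (Pi.single i 1)

/-- The gradient of a function on `ℝⁿ`. -/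
noncomputable def grad' {n : ℕ} (f : (Fin n → ℝ) → ℝ) (x : Fin n → ℝ) :
    Fin n → ℝ :=
  fun i => pderiv' i f x

section

variable {n : ℕ}

theorem pderiv'_mul {f g : (Fin n → ℝ) → ℝ} {x : Fin n → ℝ} (hf : DifferentiableAt ℝ f x)
    (hg : DifferentiableAt ℝ g x) (i : Fin n) :
    pderiv' i (fun y => f y * g y) x = pderiv' i f x * g x + f x * pderiv' i g x := by
  simp only [pderiv', fderiv_fun_mul hf hg, add_apply, smul_apply,
    smul_eq_mul]
  ring

theorem sum_pderiv'_mul {P : Fin n → (Fin n → ℝ) → ℝ} {Q : (Fin n → ℝ) → ℝ} {x : Fin n → ℝ}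
    (hP : ∀ i, DifferentiableAt ℝ (P i) x) (hQ : DifferentiableAt ℝ Q x) :
    ∑ i, pderiv' i (fun y => P i y * Q y) x
      = (∑ i, pderiv' i (P i) x) * Q x + ∑ i, P i x * pderiv' i Q x := by
  simp only [pderiv'_mul (hP _) hQ, Finset.sum_add_distrib, Finset.sum_mul]

theorem ContDiff.pderiv' {m k : WithTop ℕ∞} {f : (Fin n → ℝ) → ℝ} (hf : ContDiff ℝ k f)
    (hmk : m + 1 ≤ k) (i : Fin n) : ContDiff ℝ m (pderiv' i f) :=
  (hf.fderiv_right hmk).clm_apply contDiff_const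

theorem ContDiff.grad' {m k : WithTop ℕ∞} {f : (Fin n → ℝ) → ℝ} (hf : ContDiff ℝ k f)
    (hmk : m + 1 ≤ k) : ContDiff ℝ m (grad' f) :=
  contDiff_pi.2 (hf.pderiv' hmk)

end

theorem ContDiff.fderiv_fiber {E F G H : Type*} [NormedAddCommGroup E] [NormedSpace ℝ E]
    [NormedAddCommGroup F] [NormedSpace ℝ F] [NormedAddCommGroup G] [NormedSpace ℝ G]
    [NormedAddCommGroup H] [NormedSpace ℝ H] {m k : WithTop ℕ∞} {L : E × F × G → H}
    {u : E → F} {p : E → G} (hL : ContDiff ℝ k L) (hu : ContDiff ℝ k u) (hp : ContDiff ℝ m p)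
    (hmk : m + 1 ≤ k) :
    ContDiff ℝ m fun x => fderiv ℝ (fun w => L (x, u x, w)) (p x) :=
  ContDiff.fderiv (hL.comp (contDiff_fst.prodMk ((hu.comp contDiff_fst).prodMk contDiff_snd)))
    hp hmk

theorem noether_first_theorem_n_variables_general
    {n : ℕ}
    (L : (Fin n → ℝ) × ℝ × (Fin n → ℝ) → ℝ)
    (u Q : (Fin n → ℝ) → ℝ)
    (hL : ContDiff ℝ (⊤ : ℕ∞) L)
    (hu : ContDiff ℝ (⊤ : ℕ∞) u)
    (hQ : ContDiff ℝ (⊤ : ℕ∞) Q)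
    (Pu : (Fin n → ℝ) → ℝ) (Pp : Fin n → (Fin n → ℝ) → ℝ)
    (hPp : ∀ i x, Pp i x
      = fderiv ℝ (fun w => L (x, u x, w)) (grad' u x) (Pi.single i 1))
    (hEL : ∀ x, Pu x = ∑ i, pderiv' i (Pp i) x)
    (hinv : ∀ x, Pu x * Q x + ∑ i, Pp i x * pderiv' i Q x = 0) :
    ∀ x, ∑ i, pderiv' i (fun y => Pp i y * Q y) x = 0 := by
  have hle : ((⊤ : ℕ∞) : WithTop ℕ∞) + 1 ≤ (⊤ : ℕ∞) := by exact_mod_cast le_top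
  have hPp_smooth (i : Fin n) : ContDiff ℝ (⊤ : ℕ∞) (Pp i) := by
    rw [funext (hPp i)]
    exact (hL.fderiv_fiber hu (hu.grad' hle) hle).clm_apply contDiff_const
  intro x
  rw [sum_pderiv'_mul (fun i => (hPp_smooth i).differentiable (by simp) x)
    (hQ.differentiable (by simp) x), ← hEL x, hinv x]

/-- The conservation law of Noether's first theorem for `n` independent
variables: for a smooth first-order Lagrangian `L(x, u, p)` on
`ℝⁿ × ℝ × ℝⁿ`, a smooth Euler–Lagrange solution `u : ℝⁿ → ℝ`, and a smooth
characteristic `Q` satisfying the infinitesimal invariance identity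
`∂ᵤL·Q + ∑ᵢ ∂_{pᵢ}L·∂ᵢQ = 0` along `u`, the Noether current
`Bᵢ = ∂_{pᵢ}L(x, u, ∇u)·Q` is divergence-free: `∑ᵢ ∂ᵢBᵢ = 0`. -/
theorem noether_first_theorem_n_variables
    {n : ℕ} (hn : 1 ≤ n)
    (L : (Fin n → ℝ) × ℝ × (Fin n → ℝ) → ℝ)
    (u Q : (Fin n → ℝ) → ℝ)
    (hL : ContDiff ℝ (⊤ : ℕ∞) L)
    (hu : ContDiff ℝ (⊤ : ℕ∞) u)
    (hQ : ContDiff ℝ (⊤ : ℕ∞) Q)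
    (Pu : (Fin n → ℝ) → ℝ) (Pp : Fin n → (Fin n → ℝ) → ℝ)
    (hPu : ∀ x, Pu x = deriv (fun s => L (x, s, grad' u x)) (u x))
    (hPp : ∀ i x, Pp i x
      = fderiv ℝ (fun w => L (x, u x, w)) (grad' u x) (Pi.single i 1))
    (hEL : ∀ x, Pu x = ∑ i, pderiv' i (Pp i) x)
    (hinv : ∀ x, Pu x * Q x + ∑ i, Pp i x * pderiv' i Q x = 0) :
    ∀ x, ∑ i, pderiv' i (fun y => Pp i y * Q y) x = 0 :=
  noether_first_theorem_n_variables_general L u Q hL hu hQ Pu Pp hPp hEL hinv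
end
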